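/- arXiv:1811.11627 — 4 statements merged into one kernel-verified Lean document; each statement's English description precedes it below -/
import Mathlib

section
/- Let L be a positive integer, let z ∈ ℂ^L, γ ∈ ℝ^L, x̄ ∈ ℂ^L and c ∈ ℝ. Suppose that for every index l one has Re(z_l)·cos(γ_l) + Im(z_l)·sin(γ_l) = 1, and that Re⟨x̄, z⟩ ≥ c. Define γ'_l := 2·arg(z_l) − γ_l and x̄'_l := |x̄_l|·exp(i·arg(z_l)) for every l. Then for every l one has Re(z_l)·cos(γ'_l) + Im(z_l)·sin(γ'_l) = 1, and Re⟨x̄', z⟩ ≥ c. (This is Lemma 1 of the paper: the feasible set of problem CP^(n), defined by the updated tangent-line equality constraints and the phase-realigned spectral inequality constraint, contains the optimal solution of problem CP^(n−1).) -/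
/-!
Write `z = ‖z‖ e^{iθ}` with `θ = arg z`. The tangent-line functional is
`Re(z) cos γ + Im(z) sin γ = ‖z‖ cos (θ - γ)`, and since cosine is even it takes the same value
at `γ` and at its mirror image `2θ - γ`. For the spectral constraint, realigning the phase of
`x̄_l` with that of `z_l` turns each term `Re(conj x̄_l · z_l) ≤ ‖x̄_l‖ ‖z_l‖` into an equality,
so the sum can only grow.
-/

open Complex

namespace Complex

theorem re_mul_cos_add_im_mul_sin (z : ℂ) (γ : ℝ) :
    z.re * Real.cos γ + z.im * Real.sin γ = ‖z‖ * Real.cos (z.arg - γ) := by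
  rw [Real.cos_sub, ← norm_mul_cos_arg z, ← norm_mul_sin_arg z]
  ring

theorem re_mul_cos_add_im_mul_sin_two_mul_arg_sub (z : ℂ) (γ : ℝ) :
    z.re * Real.cos (2 * z.arg - γ) + z.im * Real.sin (2 * z.arg - γ)
      = z.re * Real.cos γ + z.im * Real.sin γ := by
  rw [re_mul_cos_add_im_mul_sin, re_mul_cos_add_im_mul_sin, ← Real.cos_neg (z.arg - γ)]
  ring_nf

theorem re_conj_mul_exp_arg_mul (r : ℝ) (z : ℂ) :
    (starRingEnd ℂ ((r : ℂ) * exp (I * z.arg)) * z).re = r * ‖z‖ := by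
  have hnorm : z.re * Real.cos z.arg + z.im * Real.sin z.arg = ‖z‖ := by
    rw [re_mul_cos_add_im_mul_sin, sub_self, Real.cos_zero, mul_one]
  rw [mul_comm I, exp_mul_I, ← ofReal_cos, ← ofReal_sin, ← hnorm]
  simp only [map_mul, map_add, conj_ofReal, conj_I, mul_re, mul_im, add_re, add_im, ofReal_re,
    ofReal_im, neg_re, neg_im, I_re, I_im]
  ring

theorem re_conj_mul_le_norm_mul_norm (w z : ℂ) : (starRingEnd ℂ w * z).re ≤ ‖w‖ * ‖z‖ := by
  simpa only [norm_mul, norm_conj] using re_le_norm (starRingEnd ℂ w * z)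

theorem re_sum_conj_mul_le_re_sum_phase_aligned {ι : Type*} (s : Finset ι) (x z : ι → ℂ) :
    (∑ l ∈ s, starRingEnd ℂ (x l) * z l).re
      ≤ (∑ l ∈ s, starRingEnd ℂ ((‖x l‖ : ℂ) * exp (I * (z l).arg)) * z l).re := by
  simp only [re_sum, re_conj_mul_exp_arg_mul]
  exact Finset.sum_le_sum fun l _ ↦ re_conj_mul_le_norm_mul_norm (x l) (z l)

end Complex

theorem stmt_0_general (L : ℕ) (z : Fin L → ℂ) (γ : Fin L → ℝ)
    (xbar : Fin L → ℂ) (c : ℝ)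
    (heq : ∀ l, (z l).re * Real.cos (γ l) + (z l).im * Real.sin (γ l) = 1)
    (hineq : c ≤ (∑ l, (starRingEnd ℂ) (xbar l) * z l).re) :
    (∀ l, (z l).re * Real.cos (2 * (z l).arg - γ l)
        + (z l).im * Real.sin (2 * (z l).arg - γ l) = 1) ∧
    c ≤ (∑ l, (starRingEnd ℂ) (((‖xbar l‖ : ℝ) : ℂ)
        * Complex.exp (Complex.I * (z l).arg)) * z l).re :=
  ⟨fun l ↦ (re_mul_cos_add_im_mul_sin_two_mul_arg_sub (z l) (γ l)).trans (heq l),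
    hineq.trans (re_sum_conj_mul_le_re_sum_phase_aligned _ xbar z)⟩

open Complex in
/-- Lemma 1 of the paper: the feasible set of `CP^(n)`, defined by the
updated tangent-line equality constraints (with `γ'_l = 2·arg(z_l) − γ_l`) and the
phase-realigned spectral inequality constraint (with `x̄'_l = |x̄_l|·exp(i·arg(z_l))`),
contains the previous optimal solution `z`. -/
theorem stmt_0 (L : ℕ) (hL : 0 < L) (z : Fin L → ℂ) (γ : Fin L → ℝ)
    (xbar : Fin L → ℂ) (c : ℝ)
    (heq : ∀ l, (z l).re * Real.cos (γ l) + (z l).im * Real.sin (γ l) = 1)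
    (hineq : c ≤ (∑ l, (starRingEnd ℂ) (xbar l) * z l).re) :
    (∀ l, (z l).re * Real.cos (2 * (z l).arg - γ l)
        + (z l).im * Real.sin (2 * (z l).arg - γ l) = 1) ∧
    c ≤ (∑ l, (starRingEnd ℂ) (((‖xbar l‖ : ℝ) : ℂ)
        * Complex.exp (Complex.I * (z l).arg)) * z l).re :=
  stmt_0_general L z γ xbar c heq hineq
end

section
/- Let R̄ be a real symmetric positive definite d×d matrix, let B be a real m×d matrix such that B·R̄⁻¹·Bᵀ is invertible, let s̄ ∈ ℝ^d, and let c ∈ ℝ. Define ŝ := R̄⁻¹·Bᵀ·(B·R̄⁻¹·Bᵀ)⁻¹·𝟏 (where 𝟏 is the all-ones vector in ℝ^m) and α := −s̄ᵀ·(R̄⁻¹ − R̄⁻¹·Bᵀ·(B·R̄⁻¹·Bᵀ)⁻¹·B·R̄⁻¹)·s̄. Assume that s̄ does not lie in the column space of Bᵀ (equivalently, s̄ is not a linear combination of the rows of B). If s̄ᵀ·ŝ − c < 0, then μ := (s̄ᵀ·ŝ − c)/α satisfies μ > 0. -/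
/-!
With `M = R̄⁻¹`, the matrix `1 - Bᵀ (B M Bᵀ)⁻¹ B M` is the `M`-orthogonal projection whose kernel
is the range of `Bᵀ`, and conjugating `M` by it gives the Schur complement
`M - M Bᵀ (B M Bᵀ)⁻¹ B M`. Hence `-α` is the squared `M`-norm of the projection of `s̄`, which is
positive because `s̄ ∉ range Bᵀ`. So `α < 0`, and `μ` is a quotient of two negative numbers.
-/

open Matrix

section SchurComplement

variable {n m : Type*} [Fintype n] [Fintype m] [DecidableEq n] [DecidableEq m]

theorem one_sub_transpose_mul_mul_one_sub {M : Matrix n n ℝ} (hM : Mᵀ = M) (B : Matrix m n ℝ)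
    (hA : IsUnit (B * M * Bᵀ)) :
    (1 - Bᵀ * (B * M * Bᵀ)⁻¹ * B * M)ᵀ * M * (1 - Bᵀ * (B * M * Bᵀ)⁻¹ * B * M) =
      M - M * Bᵀ * (B * M * Bᵀ)⁻¹ * B * M := by
  set A := B * M * Bᵀ
  have hA_symm : Aᵀ = A := by simp [A, hM, Matrix.mul_assoc]
  have hAinv_symm : A⁻¹ᵀ = A⁻¹ := by rw [transpose_nonsing_inv, hA_symm]
  have hcancel : M * (Bᵀ * (A⁻¹ * (B * (M * (Bᵀ * (A⁻¹ * (B * M))))))) =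
      M * (Bᵀ * (A⁻¹ * (B * M))) := calc
    _ = M * Bᵀ * (A⁻¹ * A) * A⁻¹ * B * M := by simp only [A, Matrix.mul_assoc]
    _ = M * (Bᵀ * (A⁻¹ * (B * M))) := by
      rw [nonsing_inv_mul _ ((isUnit_iff_isUnit_det A).mp hA), Matrix.mul_one]
      simp only [Matrix.mul_assoc]
  simp only [transpose_sub, transpose_one, transpose_mul, transpose_transpose, hM, hAinv_symm,
    sub_mul, mul_sub, one_mul, Matrix.mul_one, Matrix.mul_assoc, hcancel]
  abel

theorem dotProduct_schur_mulVec_pos {M : Matrix n n ℝ} (hM : M.PosDef) (B : Matrix m n ℝ)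
    (hA : IsUnit (B * M * Bᵀ)) {s : n → ℝ} (hs : ¬∃ v, Bᵀ *ᵥ v = s) :
    0 < s ⬝ᵥ ((M - M * Bᵀ * (B * M * Bᵀ)⁻¹ * B * M) *ᵥ s) := by
  have hM_symm : Mᵀ = M := by simpa using hM.isHermitian.eq
  set P := 1 - Bᵀ * (B * M * Bᵀ)⁻¹ * B * M
  have hPs : P *ᵥ s ≠ 0 := by
    intro h
    refine hs ⟨(B * M * Bᵀ)⁻¹ *ᵥ (B *ᵥ (M *ᵥ s)), ?_⟩
    rw [sub_mulVec, one_mulVec, sub_eq_zero] at h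
    conv_rhs => rw [h]
    simp only [mulVec_mulVec, Matrix.mul_assoc]
  rw [← one_sub_transpose_mul_mul_one_sub hM_symm B hA, ← mulVec_mulVec, ← mulVec_mulVec,
    dotProduct_mulVec, vecMul_transpose]
  simpa using hM.dotProduct_mulVec_pos hPs

end SchurComplement

theorem stmt_3_general (d m : ℕ) (Rbar : Matrix (Fin d) (Fin d) ℝ) (hR : Rbar.PosDef)
    (B : Matrix (Fin m) (Fin d) ℝ) (hB : IsUnit (B * Rbar⁻¹ * Bᵀ))
    (sbar : Fin d → ℝ) (c : ℝ)
    (hspan : ¬ ∃ v : Fin m → ℝ, Bᵀ *ᵥ v = sbar)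
    (shat : Fin d → ℝ)
    (α : ℝ)
    (hα : α = -(sbar ⬝ᵥ ((Rbar⁻¹ - Rbar⁻¹ * Bᵀ * (B * Rbar⁻¹ * Bᵀ)⁻¹ * B * Rbar⁻¹) *ᵥ sbar)))
    (hviol : sbar ⬝ᵥ shat - c < 0) :
    0 < (sbar ⬝ᵥ shat - c) / α := by
  have hα_neg : α < 0 := by
    rw [hα, neg_neg_iff_pos]
    exact dotProduct_schur_mulVec_pos hR.inv B hB hspan
  exact div_pos_of_neg_of_neg hviol hα_neg

/-- Lemma 2 of the paper: if the equality-constrained solution `ŝ`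
violates the inequality constraint `s̄ᵀs ≥ c`, then the Lagrange multiplier
`μ = (s̄ᵀŝ − c)/α` is strictly positive. -/
theorem stmt_3 (d m : ℕ) (Rbar : Matrix (Fin d) (Fin d) ℝ) (hR : Rbar.PosDef)
    (B : Matrix (Fin m) (Fin d) ℝ) (hB : IsUnit (B * Rbar⁻¹ * Bᵀ))
    (sbar : Fin d → ℝ) (c : ℝ)
    (hspan : ¬ ∃ v : Fin m → ℝ, Bᵀ *ᵥ v = sbar)
    (shat : Fin d → ℝ)
    (hshat : shat = (Rbar⁻¹ * Bᵀ * (B * Rbar⁻¹ * Bᵀ)⁻¹) *ᵥ (fun _ => 1))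
    (α : ℝ)
    (hα : α = -(sbar ⬝ᵥ ((Rbar⁻¹ - Rbar⁻¹ * Bᵀ * (B * Rbar⁻¹ * Bᵀ)⁻¹ * B * Rbar⁻¹) *ᵥ sbar)))
    (hviol : sbar ⬝ᵥ shat - c < 0) :
    0 < (sbar ⬝ᵥ shat - c) / α :=
  stmt_3_general d m Rbar hR B hB sbar c hspan shat α hα hviol
end

section
/- Let R̄ be a real symmetric positive definite d×d matrix, let B be a real m×d matrix such that B·R̄⁻¹·Bᵀ is invertible, and let s̄ ∈ ℝ^d. If s̄ does not lie in the column space of Bᵀ, then the inequality is strict: s̄ᵀ·R̄⁻¹·s̄ > s̄ᵀ·R̄⁻¹·Bᵀ·(B·R̄⁻¹·Bᵀ)⁻¹·B·R̄⁻¹·s̄; equivalently, α := −s̄ᵀ·(R̄⁻¹ − R̄⁻¹·Bᵀ·(B·R̄⁻¹·Bᵀ)⁻¹·B·R̄⁻¹)·s̄ satisfies α < 0. -/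
/-!
With `S = B M Bᵀ` and the `M`-oblique projection `P = Bᵀ S⁻¹ B M` onto the column space of `Bᵀ`,
one has `M - M Bᵀ S⁻¹ B M = (1 - P)ᵀ M (1 - P)`. Hence `sᵀ (M - M Bᵀ S⁻¹ B M) s` is the
squared `M`-norm of `(1 - P) s`, and `(1 - P) s ≠ 0` because `s` is not in the column space of `Bᵀ`.
Apply this with `M = R̄⁻¹`.
-/

open Matrix

namespace Matrix

variable {n m R : Type*} [Fintype n] [Fintype m] [DecidableEq n] [DecidableEq m]

theorem sub_mul_inv_mul_eq_transpose_mul_mul [CommRing R] {M : Matrix n n R} (hM : Mᵀ = M)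
    {B : Matrix m n R} (hB : IsUnit (B * M * Bᵀ)) :
    M - M * Bᵀ * (B * M * Bᵀ)⁻¹ * B * M =
      (1 - Bᵀ * (B * M * Bᵀ)⁻¹ * B * M)ᵀ * M * (1 - Bᵀ * (B * M * Bᵀ)⁻¹ * B * M) := by
  set S := B * M * Bᵀ with hS
  have hSt : S⁻¹ᵀ = S⁻¹ := by
    rw [transpose_nonsing_inv, hS, transpose_mul, transpose_mul, transpose_transpose, hM,
      Matrix.mul_assoc]
  have hcancel : S⁻¹ * (B * (M * (Bᵀ * (S⁻¹ * (B * M))))) = S⁻¹ * (B * M) := by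
    simp only [← Matrix.mul_assoc]
    rw [Matrix.mul_assoc S⁻¹ B, Matrix.mul_assoc S⁻¹, ← hS,
      nonsing_inv_mul _ ((isUnit_iff_isUnit_det S).mp hB), Matrix.one_mul, Matrix.mul_assoc]
  simp only [transpose_sub, transpose_one, transpose_mul, transpose_transpose, hM, hSt]
  simp only [sub_mul, mul_sub, Matrix.mul_one, Matrix.one_mul, Matrix.mul_assoc]
  rw [hcancel, sub_self, sub_zero]

theorem PosDef.dotProduct_sub_mul_inv_mul_mulVec_pos {M : Matrix n n ℝ} (hM : M.PosDef)
    {B : Matrix m n ℝ} (hB : IsUnit (B * M * Bᵀ)) {s : n → ℝ} (hs : ¬ ∃ v, Bᵀ *ᵥ v = s) :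
    0 < s ⬝ᵥ ((M - M * Bᵀ * (B * M * Bᵀ)⁻¹ * B * M) *ᵥ s) := by
  set P := Bᵀ * (B * M * Bᵀ)⁻¹ * B * M
  have hMt : Mᵀ = M := by simpa [conjTranspose_eq_transpose_of_trivial] using hM.isHermitian.eq
  have hPs : (1 - P) *ᵥ s ≠ 0 := by
    intro h
    refine hs ⟨((B * M * Bᵀ)⁻¹ * B * M) *ᵥ s, ?_⟩
    rw [sub_mulVec, one_mulVec, sub_eq_zero] at h
    rw [mulVec_mulVec]
    simpa only [P, Matrix.mul_assoc] using h.symm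
  rw [sub_mul_inv_mul_eq_transpose_mul_mul hMt hB, ← mulVec_mulVec, ← mulVec_mulVec,
    dotProduct_mulVec, vecMul_transpose]
  exact hM.dotProduct_mulVec_pos hPs

end Matrix

/-- if `s̄` is not in the column space of `Bᵀ`, the Schur-complement
inequality is strict: `s̄ᵀ·R̄⁻¹·s̄ > s̄ᵀ·R̄⁻¹·Bᵀ·(B·R̄⁻¹·Bᵀ)⁻¹·B·R̄⁻¹·s̄`, i.e. `α < 0`. -/
theorem stmt_5 (d m : ℕ) (Rbar : Matrix (Fin d) (Fin d) ℝ) (hR : Rbar.PosDef)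
    (B : Matrix (Fin m) (Fin d) ℝ) (hB : IsUnit (B * Rbar⁻¹ * Bᵀ))
    (sbar : Fin d → ℝ)
    (hspan : ¬ ∃ v : Fin m → ℝ, Bᵀ *ᵥ v = sbar) :
    sbar ⬝ᵥ ((Rbar⁻¹ * Bᵀ * (B * Rbar⁻¹ * Bᵀ)⁻¹ * B * Rbar⁻¹) *ᵥ sbar)
      < sbar ⬝ᵥ (Rbar⁻¹ *ᵥ sbar) ∧
    -(sbar ⬝ᵥ ((Rbar⁻¹ - Rbar⁻¹ * Bᵀ * (B * Rbar⁻¹ * Bᵀ)⁻¹ * B * Rbar⁻¹) *ᵥ sbar)) < 0 := by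
  have hα := hR.inv.dotProduct_sub_mul_inv_mul_mulVec_pos hB hspan
  refine ⟨?_, neg_neg_of_pos hα⟩
  rwa [sub_mulVec, dotProduct_sub, sub_pos] at hα
end

section
/- Let R̄ be a real symmetric positive definite d×d matrix, B a real m×d matrix with B·R̄⁻¹·Bᵀ invertible, s̄ ∈ ℝ^d and c ∈ ℝ. Set R̂ := (B·R̄⁻¹·Bᵀ)⁻¹, ŝ := R̄⁻¹·Bᵀ·R̂·𝟏, and α := −s̄ᵀ·(R̄⁻¹ − R̄⁻¹·Bᵀ·R̂·B·R̄⁻¹)·s̄, and assume α ≠ 0. Define μ := (s̄ᵀ·ŝ − c)/α and s* := μ·R̄⁻¹·(I − Bᵀ·R̂·B·R̄⁻¹)·s̄ + ŝ. Then B·s* = 𝟏, s̄ᵀ·s* = c, and there exists v ∈ ℝ^m such that R̄·s* + Bᵀ·v = μ·s̄ (namely v = μ·R̂·B·R̄⁻¹·s̄ − R̂·𝟏). -/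
open Matrix

/-! Eliminating the bordered KKT system by blocks: `P := R̄⁻¹(I − BᵀR̂BR̄⁻¹)` satisfies `BP = 0`
and `R̄P + BᵀR̂BR̄⁻¹ = I`, while `ŝ` satisfies `Bŝ = 𝟏` and `R̄ŝ = BᵀR̂𝟏`. Hence `s* = μPs̄ + ŝ`
meets `Bs* = 𝟏` and stationarity for every `μ`, and `α = −s̄ᵀPs̄` makes the choice of `μ`
exactly the one for which `s̄ᵀs* = c`. -/

namespace Matrix

variable {ι κ 𝕜 : Type*} [Fintype ι] [Fintype κ] [DecidableEq ι] [CommRing 𝕜]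
  {R G : Matrix ι ι 𝕜} {B : Matrix κ ι 𝕜} {C : Matrix ι κ 𝕜} {H : Matrix κ κ 𝕜}

theorem mul_one_sub_mul_mul_mul_mul (G : Matrix ι ι 𝕜) (C : Matrix ι κ 𝕜) (H : Matrix κ κ 𝕜)
    (B : Matrix κ ι 𝕜) : G * (1 - C * H * B * G) = G - G * C * H * B * G := by
  simp only [Matrix.mul_sub, Matrix.mul_one, Matrix.mul_assoc]

theorem mul_mul_one_sub_eq_zero [DecidableEq κ] (h : B * G * C * H = 1) :
    B * (G * (1 - C * H * B * G)) = 0 := by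
  calc B * (G * (1 - C * H * B * G)) = B * G - (B * G * C * H) * (B * G) := by
        simp only [Matrix.mul_sub, Matrix.mul_one, Matrix.mul_assoc]
    _ = 0 := by rw [h, Matrix.one_mul, sub_self]

theorem mul_mul_one_sub_add_mul_eq_one (hRG : R * G = 1) :
    R * (G * (1 - C * H * B * G)) + C * (H * B * G) = 1 := by
  rw [← Matrix.mul_assoc, hRG, Matrix.one_mul]
  simp only [Matrix.mul_assoc, sub_add_cancel]

theorem mulVec_smul_mulVec_add_mulVec_eq [DecidableEq κ] (h : B * G * C * H = 1) (μ : 𝕜)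
    (s : ι → 𝕜) (u : κ → 𝕜) :
    B *ᵥ (μ • ((G * (1 - C * H * B * G)) *ᵥ s) + (G * C * H) *ᵥ u) = u := by
  have hBGCH : B * (G * C * H) = 1 := by simpa only [Matrix.mul_assoc] using h
  rw [mulVec_add, mulVec_smul, mulVec_mulVec, mul_mul_one_sub_eq_zero h, zero_mulVec, smul_zero,
    zero_add, mulVec_mulVec, hBGCH, one_mulVec]

theorem mulVec_smul_mulVec_add_mulVec_add_mulVec_eq (hRG : R * G = 1) (μ : 𝕜) (s : ι → 𝕜)
    (u : κ → 𝕜) :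
    R *ᵥ (μ • ((G * (1 - C * H * B * G)) *ᵥ s) + (G * C * H) *ᵥ u)
      + C *ᵥ (μ • ((H * B * G) *ᵥ s) - H *ᵥ u) = μ • s := by
  have hRGCH : R * (G * C * H) = C * H := by
    rw [Matrix.mul_assoc, ← Matrix.mul_assoc, hRG, Matrix.one_mul]
  have hP :
      μ • ((R * (G * (1 - C * H * B * G))) *ᵥ s) + μ • ((C * (H * B * G)) *ᵥ s) = μ • s := by
    rw [← smul_add, ← add_mulVec, mul_mul_one_sub_add_mul_eq_one hRG, one_mulVec]
  rw [mulVec_add, mulVec_smul, mulVec_mulVec, mulVec_mulVec, hRGCH, mulVec_sub, mulVec_smul,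
    mulVec_mulVec, mulVec_mulVec, ← hP]
  abel

end Matrix

/-- Eqs. (42)–(45) of the paper: the closed-form solution of the KKT
system when the spectral inequality constraint is active: `s* = μR̄⁻¹(I − BᵀR̂BR̄⁻¹)s̄ + ŝ`
satisfies `Bs* = 𝟏`, `s̄ᵀs* = c`, and stationarity `R̄s* + Bᵀv = μs̄` with
`v = μR̂BR̄⁻¹s̄ − R̂𝟏`. -/
theorem stmt_10 (d m : ℕ) (Rbar : Matrix (Fin d) (Fin d) ℝ) (hR : Rbar.PosDef)
    (B : Matrix (Fin m) (Fin d) ℝ) (hB : IsUnit (B * Rbar⁻¹ * Bᵀ))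
    (sbar : Fin d → ℝ) (c : ℝ)
    (Rhat : Matrix (Fin m) (Fin m) ℝ) (hRhat : Rhat = (B * Rbar⁻¹ * Bᵀ)⁻¹)
    (shat : Fin d → ℝ) (hshat : shat = (Rbar⁻¹ * Bᵀ * Rhat) *ᵥ (fun _ => 1))
    (α : ℝ)
    (hα : α = -(sbar ⬝ᵥ ((Rbar⁻¹ - Rbar⁻¹ * Bᵀ * Rhat * B * Rbar⁻¹) *ᵥ sbar)))
    (hα0 : α ≠ 0)
    (μ : ℝ) (hμ : μ = (sbar ⬝ᵥ shat - c) / α)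
    (sstar : Fin d → ℝ)
    (hsstar : sstar =
      μ • ((Rbar⁻¹ * ((1 : Matrix (Fin d) (Fin d) ℝ) - Bᵀ * Rhat * B * Rbar⁻¹)) *ᵥ sbar)
        + shat) :
    B *ᵥ sstar = (fun _ => 1) ∧
    sbar ⬝ᵥ sstar = c ∧
    Rbar *ᵥ sstar + Bᵀ *ᵥ (μ • ((Rhat * B * Rbar⁻¹) *ᵥ sbar) - Rhat *ᵥ (fun _ => 1))
      = μ • sbar := by
  have hRRinv : Rbar * Rbar⁻¹ = 1 := mul_nonsing_inv _ (Rbar.isUnit_iff_isUnit_det.mp hR.isUnit)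
  have hRhat_right_inv : B * Rbar⁻¹ * Bᵀ * Rhat = 1 :=
    hRhat ▸ mul_nonsing_inv _ ((isUnit_iff_isUnit_det _).mp hB)
  refine ⟨?_, ?_, ?_⟩
  · rw [hsstar, hshat]
    exact mulVec_smul_mulVec_add_mulVec_eq hRhat_right_inv μ sbar _
  · have hsPs : sbar ⬝ᵥ ((Rbar⁻¹ - Rbar⁻¹ * Bᵀ * Rhat * B * Rbar⁻¹) *ᵥ sbar) = -α := by
      rw [hα, neg_neg]
    rw [hsstar, dotProduct_add, dotProduct_smul, mul_one_sub_mul_mul_mul_mul, hsPs, smul_eq_mul, hμ]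
    field_simp
    ring
  · rw [hsstar, hshat]
    exact mulVec_smul_mulVec_add_mulVec_add_mulVec_eq hRRinv μ sbar _
end
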